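/- arXiv:1110.5736 — 4 statements merged into one kernel-verified Lean document; each statement's English description precedes it below -/
import Mathlib

section
/- For the cycle C_n on n ≥ 4 vertices, the rainbow connection number of C_n equals ⌈n/2⌉. -/
open SimpleGraph

/-- An edge-colouring is rainbow-connecting: any two vertices are joined by a rainbow path. -/
def IsRainbowConnecting {V : Type*} {α : Type*} (G : SimpleGraph V) (c : Sym2 V → α) : Prop :=
  ∀ u v : V, ∃ p : G.Walk u v, p.IsPath ∧ (p.edges.map c).Nodup

/-- The rainbow connection number: least number of colours of a rainbow-connecting colouring. -/
noncomputable def rc {V : Type*} (G : SimpleGraph V) : ℕ :=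
  sInf {k | ∃ c : Sym2 V → Fin k, IsRainbowConnecting G c}

/-!
Write `k = ⌈n/2⌉`. Colouring the edge `{i, i+1}` of `C_n` by `i mod k` makes every arc of at
most `⌊n/2⌋` edges rainbow, and every pair of vertices is joined by such an arc.

Conversely, a path in `C_n` is an arc, so a rainbow path with `k' < k` colours has length at most
`k' < n/2`. If `n ≥ 2k' + 2` the vertices `0` and `k' + 1` cannot be joined. If `n = 2k' + 1`, the
path from `i` to `i + k'` must be the forward arc, so every `k'` consecutive edges carry distinct
colours; by pigeonhole the colouring is `k'`-periodic along the cycle, hence `2k'`-periodic, and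
`2k' ≡ -1` forces two adjacent edges to share a colour.
-/

open Fin.NatCast Fin.CommRing

theorem Nat.mod_eq_self_or_sub {m n : ℕ} (h : m < 2 * n) :
    m % n = m ∨ n ≤ m ∧ m % n = m - n := by
  rcases lt_or_ge m n with hmn | hnm
  · exact Or.inl (Nat.mod_eq_of_lt hmn)
  · exact Or.inr ⟨hnm, by rw [Nat.mod_eq_sub_mod hnm, Nat.mod_eq_of_lt (by omega)]⟩

theorem Nat.injOn_add_mod_mod {a n k : ℕ} (ha : a < n) (hn : n ≤ 2 * k) :
    Set.InjOn (fun t => (a + t) % n % k) (Set.Iio (n - k)) := by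
  intro s hs t ht hst
  simp only [Set.mem_Iio] at hs ht hst
  have := Nat.mod_eq_self_or_sub (show a + s < 2 * n by omega)
  have := Nat.mod_eq_self_or_sub (show a + t < 2 * n by omega)
  have := Nat.mod_eq_self_or_sub ((Nat.mod_lt (a + s) (by omega)).trans_le hn)
  have := Nat.mod_eq_self_or_sub ((Nat.mod_lt (a + t) (by omega)).trans_le hn)
  omega

theorem apply_add_card_eq_of_injOn {M α : Type*} [AddCommMonoidWithOne M] [Fintype α]
    (g : M → α) (hg : ∀ i, Set.InjOn (fun t : ℕ => g (i + t)) (Set.Iio (Fintype.card α)))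
    (i : M) : g (i + Fintype.card α) = g i := by
  classical
  set k := Fintype.card α
  have himage : (Finset.range k).image (fun t : ℕ => g (i + 1 + t)) = Finset.univ := by
    refine Finset.eq_univ_of_card _ ?_
    rw [Finset.card_image_of_injOn (by simpa using hg (i + 1)), Finset.card_range]
  obtain ⟨t, ht, hgt⟩ := Finset.mem_image.mp (himage ▸ Finset.mem_univ (g i))
  rw [Finset.mem_range] at ht
  have htk : t + 1 = k := by
    by_contra hne
    have := hg i (show t + 1 ∈ Set.Iio k by simp; omega) (show 0 ∈ Set.Iio k by simp; omega)
      (by simp only [← hgt, Nat.cast_zero, add_zero]; push_cast; abel_nf)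
    omega
  rw [← hgt, ← htk]
  push_cast
  abel_nf

theorem Fin.injective_sym2_mk_add_one {n : ℕ} [NeZero n] (hn : 3 ≤ n) :
    Function.Injective fun i : Fin n => s(i, i + 1) := by
  intro i j hij
  rcases Sym2.eq_iff.mp hij with ⟨h, -⟩ | ⟨h₁, h₂⟩
  · exact h
  · have htwo : ((2 : ℕ) : Fin n) = 0 := by push_cast; linear_combination h₂ - h₁
    have := Nat.le_of_dvd two_pos (Fin.natCast_eq_zero.mp htwo)
    omega

namespace SimpleGraph

variable {V : Type*} {G : SimpleGraph V} {u v : V}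

theorem Walk.edges_eq_map_range (p : G.Walk u v) :
    p.edges = (List.range p.length).map fun i => s(p.getVert i, p.getVert (i + 1)) :=
  List.ext_getElem (by simp) fun i _ _ => by simp [Walk.getElem_edges]

theorem Walk.nodup_map_edges_iff {α : Type*} (p : G.Walk u v) (c : Sym2 V → α) :
    (p.edges.map c).Nodup ↔
      Set.InjOn (fun i => c s(p.getVert i, p.getVert (i + 1))) (Set.Iio p.length) := by
  rw [p.edges_eq_map_range, List.map_map, List.nodup_map_iff_inj_on List.nodup_range]
  simp [Set.InjOn]

theorem Walk.length_le_card_of_nodup_map_edges {α : Type*} [Fintype α] {p : G.Walk u v}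
    {c : Sym2 V → α} (h : (p.edges.map c).Nodup) : p.length ≤ Fintype.card α := by
  simpa using h.length_le_card

theorem Walk.nodup_map_edges_iff_of_getVert_eq_add {M α : Type*} [AddMonoidWithOne M]
    {G : SimpleGraph M} {u v : M} {p : G.Walk u v} (hp : ∀ j ≤ p.length, p.getVert j = u + j)
    (c : Sym2 M → α) :
    (p.edges.map c).Nodup ↔
      Set.InjOn (fun t : ℕ => c s(u + t, u + t + 1)) (Set.Iio p.length) := by
  rw [p.nodup_map_edges_iff]
  refine Set.EqOn.injOn_iff fun t (ht : t < p.length) => ?_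
  rw [hp t ht.le, hp (t + 1) ht, Nat.cast_succ, add_assoc]

variable {n : ℕ} [NeZero n]

theorem cycleGraph_adj_add_one (hn : 2 ≤ n) (u : Fin n) : (cycleGraph n).Adj u (u + 1) := by
  rw [cycleGraph_adj', add_sub_cancel_left, Fin.val_one', Nat.mod_eq_of_lt hn]
  exact Or.inr rfl

theorem eq_add_one_or_eq_sub_one_of_cycleGraph_adj {u v : Fin n} (h : (cycleGraph n).Adj u v) :
    v = u + 1 ∨ v = u - 1 := by
  have hval : ∀ x : Fin n, x.val = 1 → x = 1 := fun x hx =>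
    Fin.ext (by have := x.isLt; rw [hx, Fin.val_one', Nat.mod_eq_of_lt (by omega)])
  rcases cycleGraph_adj'.mp h with h | h
  · exact Or.inr (by linear_combination -hval _ h)
  · exact Or.inl (by linear_combination hval _ h)

theorem cycleGraph_isPath_getVert {u v : Fin n} {p : (cycleGraph n).Walk u v} (hp : p.IsPath) :
    ∃ ε : Fin n, (ε = 1 ∨ ε = -1) ∧ ∀ j ≤ p.length, p.getVert j = u + j * ε := by
  rcases Nat.eq_zero_or_pos p.length with hzero | hpos
  · exact ⟨1, Or.inl rfl, fun j hj => by simp [show j = 0 by omega]⟩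
  obtain ⟨ε, hε, hstep⟩ : ∃ ε : Fin n, (ε = 1 ∨ ε = -1) ∧ p.getVert 1 = u + ε := by
    have := eq_add_one_or_eq_sub_one_of_cycleGraph_adj (p.adj_getVert_succ hpos)
    rw [Walk.getVert_zero, sub_eq_add_neg] at this
    rcases this with h | h
    exacts [⟨1, Or.inl rfl, h⟩, ⟨-1, Or.inr rfl, h⟩]
  have hpair : ∀ j, j + 1 ≤ p.length →
      p.getVert j = u + j * ε ∧ p.getVert (j + 1) = u + (j + 1 : ℕ) * ε := by
    intro j hj
    induction j with
    | zero => simpa using hstep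
    | succ j ih =>
      obtain ⟨hprev, hcur⟩ := ih (by omega)
      refine ⟨hcur, ?_⟩
      have hnext : p.getVert (j + 2) = p.getVert (j + 1) + ε ∨
          p.getVert (j + 2) = p.getVert (j + 1) - ε := by
        have := eq_add_one_or_eq_sub_one_of_cycleGraph_adj
          (p.adj_getVert_succ (by omega : j + 1 < _))
        rcases hε with rfl | rfl
        · exact this
        · rw [sub_neg_eq_add, ← sub_eq_add_neg]; exact this.symm
      rcases hnext with h | h
      · rw [h, hcur]; push_cast; ring
      · have hback : p.getVert (j + 2) = p.getVert j := by rw [h, hcur, hprev]; push_cast; ring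
        have := hp.getVert_injOn (by simp; omega) (by simp; omega) hback
        omega
  refine ⟨ε, hε, fun j hj => ?_⟩
  rcases j with _ | j
  · simp
  · exact (hpair j hj).2

theorem cycleGraph_isPath_forward_or_backward {u v : Fin n} {p : (cycleGraph n).Walk u v}
    (hp : p.IsPath) :
    (p.length = (v - u).val ∧ ∀ j ≤ p.length, p.getVert j = u + j) ∨
      p.length = (u - v).val := by
  obtain ⟨ε, hε, hget⟩ := cycleGraph_isPath_getVert hp
  have hv : v = u + p.length * ε := by rw [← hget _ le_rfl, Walk.getVert_length]
  have hlt : p.length < n := by simpa using hp.length_lt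
  rcases hε with rfl | rfl
  · have hvu : v - u = p.length := by linear_combination hv
    exact Or.inl ⟨by rw [hvu, Fin.val_cast_of_lt hlt], by simpa using hget⟩
  · have huv : u - v = p.length := by linear_combination -hv
    exact Or.inr (by rw [huv, Fin.val_cast_of_lt hlt])

theorem cycleGraph_exists_walk_getVert_eq_add (hn : 2 ≤ n) (u : Fin n) (l : ℕ) :
    ∃ p : (cycleGraph n).Walk u (u + l),
      p.length = l ∧ ∀ j ≤ p.length, p.getVert j = u + j := by
  induction l generalizing u with
  | zero => exact ⟨Walk.nil.copy rfl (by simp), by simp, fun j hj => by simp_all⟩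
  | succ l ih =>
    obtain ⟨p, hlen, hget⟩ := ih (u + 1)
    refine ⟨(Walk.cons (cycleGraph_adj_add_one hn u) p).copy rfl (by push_cast; ring),
      by simp [hlen], ?_⟩
    rintro (_ | j) hj
    · simp
    · rw [Walk.getVert_copy, Walk.getVert_cons_succ, hget j (by simp at hj; omega)]
      push_cast
      ring

theorem cycleGraph_isPath_of_getVert_eq_add {u v : Fin n} {p : (cycleGraph n).Walk u v}
    (hp : ∀ j ≤ p.length, p.getVert j = u + j) (hlt : p.length < n) : p.IsPath := by
  rw [← Walk.IsPath.getVert_injOn_iff]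
  intro i (hi : i ≤ p.length) j (hj : j ≤ p.length) hij
  rw [hp i hi, hp j hj, add_right_inj, Fin.ext_iff, Fin.val_cast_of_lt (by omega),
    Fin.val_cast_of_lt (by omega)] at hij
  exact hij

noncomputable def cycleEdgeColoring (n k : ℕ) [NeZero n] [NeZero k] : Sym2 (Fin n) → Fin k :=
  Function.extend (fun i : Fin n => s(i, i + 1)) (fun i => (i.val : Fin k)) 0

variable {k : ℕ} [NeZero k]

theorem cycleEdgeColoring_apply (hn : 3 ≤ n) (i : Fin n) :
    cycleEdgeColoring n k s(i, i + 1) = i.val :=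
  (Fin.injective_sym2_mk_add_one hn).extend_apply _ _ i

theorem cycleEdgeColoring_exists_rainbow_path (hn : 3 ≤ n) (hk : n ≤ 2 * k) {u v : Fin n}
    (huv : (v - u).val ≤ n - k) :
    ∃ p : (cycleGraph n).Walk u v, p.IsPath ∧ (p.edges.map (cycleEdgeColoring n k)).Nodup := by
  obtain ⟨p, hlen, hget⟩ := cycleGraph_exists_walk_getVert_eq_add (by omega) u (v - u).val
  refine ⟨p.copy rfl (by simp), ?_, ?_⟩
  · rw [Walk.isPath_copy]
    exact cycleGraph_isPath_of_getVert_eq_add hget (by have := (v - u).isLt; omega)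
  · rw [Walk.edges_copy, Walk.nodup_map_edges_iff_of_getVert_eq_add hget, hlen]
    intro s hs t ht hst
    simp only [cycleEdgeColoring_apply hn, Fin.ext_iff, Fin.val_natCast, Fin.val_add,
      Nat.add_mod_mod] at hst
    exact Nat.injOn_add_mod_mod u.isLt hk (by simp at hs ⊢; omega) (by simp at ht ⊢; omega) hst

theorem isRainbowConnecting_cycleEdgeColoring (hn : 3 ≤ n) (hk : k = (n + 1) / 2) :
    IsRainbowConnecting (cycleGraph n) (cycleEdgeColoring n k) := by
  intro u v
  by_cases huv : (v - u).val ≤ n - k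
  · exact cycleEdgeColoring_exists_rainbow_path hn (by omega) huv
  · obtain ⟨p, hp, hrainbow⟩ :=
      cycleEdgeColoring_exists_rainbow_path (k := k) hn (by omega) (u := v) (v := u)
        (by rw [← neg_sub, Fin.val_neg]; split_ifs <;> omega)
    refine ⟨p.reverse, hp.reverse, ?_⟩
    rwa [Walk.edges_reverse, List.map_reverse, List.nodup_reverse]

end SimpleGraph

section cycleGraph

variable {n k : ℕ} [NeZero n] {c : Sym2 (Fin n) → Fin k}

theorem IsRainbowConnecting.injOn_cycleGraph (hc : IsRainbowConnecting (cycleGraph n) c)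
    (hkn : 2 * k < n) (i : Fin n) :
    Set.InjOn (fun t : ℕ => c s(i + t, i + t + 1)) (Set.Iio k) := by
  rcases Nat.eq_zero_or_pos k with rfl | hkpos
  · simp
  obtain ⟨p, hp, hrainbow⟩ := hc i (i + k)
  have hlen : p.length ≤ k := by simpa using Walk.length_le_card_of_nodup_map_edges hrainbow
  have hk : (k : Fin n).val = k := Fin.val_cast_of_lt (by omega)
  rcases cycleGraph_isPath_forward_or_backward hp with ⟨hl, hfwd⟩ | hl
  · rw [add_sub_cancel_left, hk] at hl
    rwa [Walk.nodup_map_edges_iff_of_getVert_eq_add hfwd, hl] at hrainbow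
  · rw [sub_add_cancel_left, Fin.val_neg, if_neg (by rw [Fin.ext_iff, hk]; simp; omega), hk] at hl
    omega

theorem IsRainbowConnecting.cycleGraph_le (hn : 4 ≤ n)
    (hc : IsRainbowConnecting (cycleGraph n) c) : (n + 1) / 2 ≤ k := by
  by_contra! hk
  obtain hodd | hlarge : n = 2 * k + 1 ∨ 2 * k + 2 ≤ n := by omega
  · set g : Fin n → Fin k := fun x => c s(x, x + 1)
    have hwindow : ∀ i, Set.InjOn (fun t : ℕ => g (i + t)) (Set.Iio k) :=
      hc.injOn_cycleGraph (by omega)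
    have hperiod : ∀ i, g (i + k) = g i := by
      simpa using apply_add_card_eq_of_injOn g (by simpa using hwindow)
    have hzero : (1 + k + k : Fin n) = 0 := by
      exact_mod_cast Fin.natCast_eq_zero.mpr ⟨1, by omega⟩
    have hadjacent : g (0 + (1 : ℕ)) = g (0 + (0 : ℕ)) := calc
      _ = g (1 + k + k) := by rw [hperiod, hperiod]; simp
      _ = _ := by rw [hzero]; simp
    have := hwindow 0 (show 1 ∈ Set.Iio k by simp; omega) (show 0 ∈ Set.Iio k by simp; omega)
      hadjacent
    omega
  · obtain ⟨p, hp, hrainbow⟩ := hc 0 (k + 1 : ℕ)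
    have hlen : p.length ≤ k := by simpa using Walk.length_le_card_of_nodup_map_edges hrainbow
    have hk : ((k + 1 : ℕ) : Fin n).val = k + 1 := Fin.val_cast_of_lt (by omega)
    rcases cycleGraph_isPath_forward_or_backward hp with ⟨hl, -⟩ | hl
    · rw [sub_zero, hk] at hl
      omega
    · rw [zero_sub, Fin.val_neg, if_neg (by rw [Fin.ext_iff, hk]; simp), hk] at hl
      omega

end cycleGraph

/-- For `n ≥ 4`, the rainbow connection number of the cycle `C_n` equals `⌈n/2⌉`. -/
theorem rc_cycleGraph (n : ℕ) (hn : 4 ≤ n) :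
    rc (SimpleGraph.cycleGraph n) = (n + 1) / 2 := by
  have : NeZero n := ⟨by omega⟩
  have : NeZero ((n + 1) / 2) := ⟨by omega⟩
  have hupper := isRainbowConnecting_cycleEdgeColoring (n := n) (by omega) rfl
  refine le_antisymm (Nat.sInf_le ⟨_, hupper⟩) (le_csInf ⟨_, _, hupper⟩ ?_)
  rintro k ⟨c, hc⟩
  exact hc.cycleGraph_le hn
end

section
/- Let G be a 2-connected graph that contains an odd cycle and is not itself a cycle. Then G contains an even cycle. -/
/-!
Take an odd cycle `C`. Since `G` is connected and is not `C`, some edge `ab` outside `C` starts at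
a vertex `a` of `C`, and since `G - a` is connected, `b` can be joined to `C` avoiding `a`. This
yields an ear: a path `P` from `a` to another vertex `y` of `C` that meets `C` only at its ends
and shares no edge with it. The two `a`–`y` arcs of `C` have lengths of odd sum, so one of them
has the parity of `P`, and together with `P` it closes an even cycle.
-/

open SimpleGraph

/-- A graph is 2-connected: at least 3 vertices and deleting any vertex leaves it connected. -/
def TwoConnected {V : Type*} [Fintype V] (G : SimpleGraph V) : Prop :=
  3 ≤ Fintype.card V ∧ ∀ v : V, (G.induce {w : V | w ≠ v}).Connected

theorem TwoConnected.connected {V : Type*} [Fintype V] {G : SimpleGraph V}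
    (h2 : TwoConnected G) : G.Connected := by
  classical
  have : Nonempty V := Fintype.card_pos_iff.1 (by linarith [h2.1])
  refine ⟨fun a b => ?_⟩
  obtain ⟨c, -, hc⟩ : ∃ c ∈ Finset.univ, c ∉ ({a, b} : Finset V) :=
    Finset.exists_mem_notMem_of_card_lt_card
      (by rw [Finset.card_univ]; linarith [h2.1, Finset.card_le_two (a := a) (b := b)])
  rw [Finset.mem_insert, Finset.mem_singleton, not_or] at hc
  simpa using ((h2.2 c).preconnected ⟨a, Ne.symm hc.1⟩ ⟨b, Ne.symm hc.2⟩).map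
    (Embedding.induce {w | w ≠ c}).toHom

namespace SimpleGraph

variable {V : Type*} {G : SimpleGraph V}

theorem Connected.exists_adj_not_adj_of_ne_top {H : G.Subgraph} (hG : G.Connected)
    (hH : H.verts.Nonempty) (hne : H ≠ ⊤) :
    ∃ a ∈ H.verts, ∃ b, G.Adj a b ∧ ¬ H.Adj a b := by
  by_contra! h
  have hverts : ∀ u, u ∈ H.verts := by
    intro u
    by_contra hu
    obtain ⟨w, hw⟩ := hH
    obtain ⟨d, -, hd, hd'⟩ := (hG.preconnected w u).some.exists_boundary_dart H.verts hw hu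
    exact hd' (h _ hd _ d.adj).snd_mem
  exact hne (eq_top_iff.2 ⟨fun u _ => hverts u, fun a b hab => h a (hverts a) b hab⟩)

namespace Walk

theorem exists_mem_support_ne {u w : V} (p : G.Walk u w) (hp : ¬ p.Nil) (a : V) :
    ∃ c ∈ p.support, c ≠ a := by
  rcases eq_or_ne u a with rfl | hu
  · exact ⟨p.snd, List.mem_of_mem_tail (p.snd_mem_tail_support hp), (p.adj_snd hp).ne'⟩
  · exact ⟨u, p.start_mem_support, hu⟩

theorem disjoint_edges_of_forall_mem_support_eq {u v u' v' s : V} {p : G.Walk u v}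
    {q : G.Walk u' v'} (h : ∀ z ∈ p.support, z ∈ q.support → z = s) :
    p.edges.Disjoint q.edges := by
  intro e hp hq
  induction e using Sym2.ind with
  | _ x y =>
    have hxy := h x (p.fst_mem_support_of_mem_edges hp) (q.fst_mem_support_of_mem_edges hq)
    have hyx := h y (p.snd_mem_support_of_mem_edges hp) (q.snd_mem_support_of_mem_edges hq)
    exact (p.adj_of_mem_edges hp).ne (hxy.trans hyx.symm)

theorem exists_isPath_to_first_mem {S : Set V} {u t : V} (W : G.Walk u t) (ht : t ∈ S) :
    ∃ x ∈ S, ∃ Q : G.Walk u x, Q.IsPath ∧ Q.support ⊆ W.support ∧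
      ∀ z ∈ Q.support, z ∈ S → z = x := by
  classical
  induction W with
  | nil => exact ⟨_, ht, nil, by simp, by simp, by simp⟩
  | @cons u w t h W ih =>
    by_cases hu : u ∈ S
    · exact ⟨u, hu, nil, by simp, by simp, by simp⟩
    obtain ⟨x, hx, Q, hQ, hQW, hfirst⟩ := ih ht
    by_cases huQ : u ∈ Q.support
    · refine ⟨x, hx, Q.dropUntil u huQ, hQ.dropUntil huQ, ?_, ?_⟩
      · exact fun z hz => List.mem_cons_of_mem _ (hQW (Q.support_dropUntil_subset_support huQ hz))
      · exact fun z hz => hfirst z (Q.support_dropUntil_subset_support huQ hz)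
    · refine ⟨x, hx, cons h Q, hQ.cons huQ, List.cons_subset_cons _ hQW, ?_⟩
      rintro z (_ | ⟨_, hz⟩) hzS
      · exact absurd hzS hu
      · exact hfirst z hz hzS

theorem IsPath.start_notMem_tail_support {u v : V} {p : G.Walk u v} (hp : p.IsPath) :
    u ∉ p.support.tail :=
  (List.nodup_cons.1 (by rw [p.cons_tail_support]; exact hp.support_nodup)).1

theorem IsPath.isCycle_append_of_ear {s t u v : V} {c : G.Walk s t} {p : G.Walk u v}
    {q : G.Walk v u} (hp : p.IsPath) (hq : q.IsPath) (huv : u ≠ v) (hpc : p.support ⊆ c.support)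
    (hpe : p.edges ⊆ c.edges) (hqc : ∀ z ∈ q.support, z ∈ c.support → z = u ∨ z = v)
    (hqe : q.edges.Disjoint c.edges) : (p.append q).IsCycle := by
  rw [isCycle_def, isTrail_append, tail_support_append, List.nodup_append']
  refine ⟨⟨hp.isTrail, hq.isTrail, fun e hep heq => hqe heq (hpe hep)⟩,
    fun h => not_nil_of_ne huv (nil_append_iff.1 (h ▸ nil_nil)).1,
    hp.support_nodup.tail, hq.support_nodup.tail, fun z hzp hzq => ?_⟩
  rcases hqc z (List.mem_of_mem_tail hzq) (hpc (List.mem_of_mem_tail hzp)) with rfl | rfl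
  · exact hp.start_notMem_tail_support hzp
  · exact hq.start_notMem_tail_support hzq

theorem exists_ear_of_adj {s t a b c : V} {C : G.Walk s t}
    (hconn : (G.induce {z | z ≠ a}).Connected) (hc : c ∈ C.support) (hca : c ≠ a)
    (hab : G.Adj a b) (habC : s(a, b) ∉ C.edges) :
    ∃ y ∈ C.support, y ≠ a ∧ ∃ P : G.Walk a y, P.IsPath ∧
      (∀ z ∈ P.support, z ∈ C.support → z = a ∨ z = y) ∧ P.edges.Disjoint C.edges := by
  obtain ⟨W⟩ := hconn.preconnected ⟨b, hab.ne'⟩ ⟨c, hca⟩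
  set W' : G.Walk b c := W.map (Embedding.induce _).toHom
  have haW : a ∉ W'.support := by
    change a ∉ (W.map (Embedding.induce _).toHom).support
    rw [support_map, List.mem_map]
    rintro ⟨⟨z, hz⟩, -, hza⟩
    exact hz hza
  obtain ⟨y, hy, R, hR, hRW, hRC⟩ :=
    W'.exists_isPath_to_first_mem (S := {z | z ∈ C.support}) hc
  have haR : a ∉ R.support := fun h => haW (hRW h)
  refine ⟨y, hy, fun hya => haR (hya ▸ R.end_mem_support), cons hab R, hR.cons haR, ?_, ?_⟩
  · rintro z (_ | ⟨_, hz⟩) hzC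
    · exact Or.inl rfl
    · exact Or.inr (hRC z hz hzC)
  · rw [edges_cons, List.disjoint_cons_left]
    exact ⟨habC, disjoint_edges_of_forall_mem_support_eq hRC⟩

theorem IsCycle.exists_even_of_odd_of_ear {v x y : V} {C : G.Walk v v} (hC : C.IsCycle)
    (hodd : Odd C.length) (hx : x ∈ C.support) (hy : y ∈ C.support) (hxy : x ≠ y)
    {P : G.Walk x y} (hP : P.IsPath)
    (hPC : ∀ z ∈ P.support, z ∈ C.support → z = x ∨ z = y)
    (hPe : P.edges.Disjoint C.edges) :
    ∃ (w : V) (c : G.Walk w w), c.IsCycle ∧ Even c.length := by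
  classical
  set C' := C.rotate x hx
  have hC' : C'.IsCycle := hC.rotate hx
  have hy' : y ∈ C'.support := (C.mem_support_rotate_iff x hx).2 hy
  set T := C'.takeUntil y hy'
  set D := C'.dropUntil y hy'
  have hspec : T.append D = C' := C'.take_spec hy'
  have hT : T.IsPath := hC'.isPath_takeUntil hy'
  have hD : D.IsPath :=
    IsCycle.isPath_of_append_right (not_nil_of_ne hxy) (by rwa [hspec])
  have hlen : T.length + D.length = C.length := by
    rw [← length_append, hspec, length_rotate]
  have hsupp : C'.support ⊆ C.support := fun z hz => (C.mem_support_rotate_iff x hx).1 hz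
  have hedges : C'.edges ⊆ C.edges := (C.rotate_edges x hx).perm.subset
  have hcycT : (T.append P.reverse).IsCycle :=
    hT.isCycle_append_of_ear hP.reverse hxy
      (fun z hz => hsupp (C'.support_takeUntil_subset_support hy' hz))
      (fun e he => hedges (C'.edges_takeUntil_subset_edges hy' he))
      (by simpa only [support_reverse, List.mem_reverse] using hPC)
      (by simpa only [edges_reverse, List.disjoint_reverse_left] using hPe)
  have hcycD : (D.append P).IsCycle :=
    hD.isCycle_append_of_ear hP hxy.symm
      (fun z hz => hsupp (C'.support_dropUntil_subset_support hy' hz))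
      (fun e he => hedges (C'.edges_dropUntil_subset_edges hy' he))
      (fun z hz hzC => (hPC z hz hzC).symm) hPe
  rcases Nat.even_or_odd (T.length + P.length) with heven | hodd'
  · exact ⟨x, _, hcycT, by rwa [length_append, length_reverse]⟩
  · refine ⟨y, _, hcycD, ?_⟩
    rw [Nat.odd_iff] at hodd hodd'
    rw [length_append, Nat.even_iff]
    omega

end Walk

end SimpleGraph

/-- A 2-connected graph containing an odd cycle which is not itself a cycle
contains an even cycle. -/
theorem even_cycle_of_odd_cycle_not_cycle {V : Type*} [Fintype V] (G : SimpleGraph V)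
    (h2 : TwoConnected G)
    (hodd : ∃ (v : V) (p : G.Walk v v), p.IsCycle ∧ Odd p.length)
    (hnotcycle : ¬ ∃ (v : V) (p : G.Walk v v), p.IsCycle ∧ p.toSubgraph = ⊤) :
    ∃ (v : V) (p : G.Walk v v), p.IsCycle ∧ Even p.length := by
  obtain ⟨v, C, hC, hCodd⟩ := hodd
  obtain ⟨a, ha, b, hab, habC⟩ := h2.connected.exists_adj_not_adj_of_ne_top
    ⟨v, C.start_mem_verts_toSubgraph⟩ fun hC' => hnotcycle ⟨v, C, hC, hC'⟩
  rw [Walk.mem_verts_toSubgraph] at ha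
  rw [Walk.adj_toSubgraph_iff_mem_edges] at habC
  obtain ⟨c, hc, hca⟩ := C.exists_mem_support_ne hC.not_nil a
  obtain ⟨y, hy, hya, P, hP, hPC, hPe⟩ := Walk.exists_ear_of_adj (h2.2 a) hc hca hab habC
  exact hC.exists_even_of_odd_of_ear hCodd ha hy hya.symm hP hPC hPe
end

section
/- Let G be a 2-connected graph containing an odd cycle C and a connected subgraph H with |V(H)| ≥ 2 such that C meets H in exactly one vertex. Then G contains an odd H-path. -/
open SimpleGraph

/-- `p` is a `K`-path: a path of positive length meeting the subgraph `K`
exactly in its two endvertices (and using no edge of `K`). -/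
def IsHPathWalk {V : Type*} (G : SimpleGraph V) (K : G.Subgraph) {u v : V}
    (p : G.Walk u v) : Prop :=
  p.IsPath ∧ 0 < p.length ∧ u ∈ K.verts ∧ v ∈ K.verts ∧
  (∀ w ∈ p.support, w ≠ u → w ≠ v → w ∉ K.verts) ∧
  (∀ e ∈ p.edges, e ∉ K.edgeSet)

/-! Let `x` be the vertex where `C` meets `H`. Since `G - x` is connected, there is a path `P`
from `C - x` to `H - x` avoiding `x`; a shortest one meets `C` only at its first vertex `u` and
`H` only at its last vertex `z`. The two arcs of the odd cycle `C` from `x` to `u` have lengths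
of different parity, so one of them followed by `P` is an odd `H`-path from `x` to `z`. -/

namespace SimpleGraph.Walk

variable {V : Type*} {G : SimpleGraph V}

theorem IsPath.append_of_support_inter {u v w : V} {p : G.Walk u v} {q : G.Walk v w}
    (hp : p.IsPath) (hq : q.IsPath) (hpq : ∀ x ∈ p.support, x ∈ q.support → x = v) :
    (p.append q).IsPath := by
  have hq' := hq.support_nodup
  rw [← q.cons_tail_support, List.nodup_cons] at hq'
  rw [isPath_def, support_append, List.nodup_append]
  refine ⟨hp.support_nodup, hq'.2, fun x hx y hy hxy => ?_⟩
  subst hxy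
  exact hq'.1 (hpq x hx (List.mem_of_mem_tail hy) ▸ hy)

theorem exists_isPath_from_to_sets {a b : V} (p : G.Walk a b) {S T : Set V} (ha : a ∈ S)
    (hb : b ∈ T) :
    ∃ (u v : V) (q : G.Walk u v), q.IsPath ∧ u ∈ S ∧ v ∈ T ∧ q.support ⊆ p.support ∧
      (∀ w ∈ q.support, w ∈ S → w = u) ∧ (∀ w ∈ q.support, w ∈ T → w = v) := by
  classical
  have hex : ∃ n, ∃ (u v : V) (q : G.Walk u v), q.IsPath ∧ u ∈ S ∧ v ∈ T ∧
      q.support ⊆ p.support ∧ q.length = n :=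
    ⟨_, a, b, p.bypass, p.bypass_isPath, ha, hb, p.support_bypass_subset_support, rfl⟩
  obtain ⟨u, v, q, hq, hu, hv, hqp, hlen⟩ := Nat.find_spec hex
  refine ⟨u, v, q, hq, hu, hv, hqp, fun w hw hwS => ?_, fun w hw hwT => ?_⟩
  · by_contra hwu
    refine Nat.find_min hex (hlen ▸ length_dropUntil_lt_length hw hwu)
      ⟨w, v, q.dropUntil w hw, hq.dropUntil hw, hwS, hv, ?_, rfl⟩
    exact List.Subset.trans (q.support_dropUntil_subset_support hw) hqp
  · by_contra hwv
    refine Nat.find_min hex (hlen ▸ length_takeUntil_lt_length hw hwv)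
      ⟨u, w, q.takeUntil w hw, hq.takeUntil hw, hu, hwT, ?_, rfl⟩
    exact List.Subset.trans (q.support_takeUntil_subset_support hw) hqp

theorem IsCycle.exists_isPath_odd_length_add {v : V} [DecidableEq V] {c : G.Walk v v}
    (hc : c.IsCycle) (hodd : Odd c.length) {x u : V} (hx : x ∈ c.support) (hu : u ∈ c.support)
    (hxu : x ≠ u) (n : ℕ) :
    ∃ A : G.Walk x u, A.IsPath ∧ A.support ⊆ c.support ∧ Odd (A.length + n) := by
  set d := c.rotate x hx
  have hd : d.IsCycle := hc.rotate hx
  have hdc {w : V} : w ∈ d.support ↔ w ∈ c.support := mem_support_rotate_iff c x hx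
  have hud : u ∈ d.support := hdc.mpr hu
  have hsplit := d.take_spec hud
  have hlen : (d.takeUntil u hud).length + (d.dropUntil u hud).length = c.length := by
    rw [← length_append, hsplit, length_rotate]
  by_cases hpar : Odd ((d.takeUntil u hud).length + n)
  · exact ⟨_, hd.isPath_takeUntil hud,
      fun w hw => hdc.mp (d.support_takeUntil_subset_support hud hw), hpar⟩
  · refine ⟨(d.dropUntil u hud).reverse, ?_, fun w hw => ?_, ?_⟩
    · rw [← hsplit] at hd
      exact (hd.isPath_of_append_right (not_nil_of_ne hxu)).reverse
    · rw [support_reverse, List.mem_reverse] at hw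
      exact hdc.mp (d.support_dropUntil_subset_support hud hw)
    · rw [length_reverse, Nat.odd_iff]
      rw [Nat.odd_iff] at hodd hpar
      omega

end SimpleGraph.Walk

theorem isHPathWalk_append {V : Type*} {G : SimpleGraph V} {K : G.Subgraph} {x u z : V}
    {A : G.Walk x u} {P : G.Walk u z} (hA : A.IsPath) (hP : P.IsPath)
    (hAK : ∀ w ∈ A.support, w ∈ K.verts → w = x) (hPK : ∀ w ∈ P.support, w ∈ K.verts → w = z)
    (hAP : ∀ w ∈ A.support, w ∈ P.support → w = u) (hx : x ∈ K.verts) (hz : z ∈ K.verts)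
    (hxz : x ≠ z) : IsHPathWalk G K (A.append P) := by
  refine ⟨hA.append_of_support_inter hP hAP, ?_, hx, hz, fun w hw hwx hwz hwK => ?_, ?_⟩
  · exact Walk.not_nil_iff_lt_length.mp (Walk.not_nil_of_ne hxz)
  · rcases (Walk.mem_support_append_iff _ _).mp hw with hw | hw
    exacts [hwx (hAK w hw hwK), hwz (hPK w hw hwK)]
  · intro e he heK
    induction e using Sym2.ind with
    | _ a b =>
      have hab := (K.mem_edgeSet.mp heK)
      rw [Walk.edges_append, List.mem_append] at he
      rcases he with he | he
      · exact hab.ne ((hAK a (A.fst_mem_support_of_mem_edges he) hab.fst_mem).trans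
          (hAK b (A.snd_mem_support_of_mem_edges he) hab.snd_mem).symm)
      · exact hab.ne ((hPK a (P.fst_mem_support_of_mem_edges he) hab.fst_mem).trans
          (hPK b (P.snd_mem_support_of_mem_edges he) hab.snd_mem).symm)

theorem odd_hpath_of_odd_cycle_general {V : Type*} [Fintype V] (G : SimpleGraph V)
    (h2 : TwoConnected G) (H : G.Subgraph)
    (hcard : 2 ≤ H.verts.ncard)
    (v₀ : V) (C : G.Walk v₀ v₀) (hC : C.IsCycle) (hCodd : Odd C.length)
    (hmeet : ∃ x : V, {w : V | w ∈ C.support ∧ w ∈ H.verts} = {x}) :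
    ∃ (u v : V) (q : G.Walk u v), IsHPathWalk G H q ∧ Odd q.length := by
  classical
  obtain ⟨x, hx⟩ := hmeet
  have hCH (w : V) : w ∈ C.support → w ∈ H.verts → w = x := fun h h' => hx.subset ⟨h, h'⟩
  obtain ⟨hxC, hxH⟩ : x ∈ C.support ∧ x ∈ H.verts := hx.superset rfl
  obtain ⟨y, hyH, hyx⟩ := Set.exists_ne_of_one_lt_ncard hcard x
  obtain ⟨c, hcC, hcx⟩ : ∃ c ∈ C.support, c ≠ x := by
    by_cases h : v₀ = x
    · exact ⟨C.snd, C.getVert_mem_support 1, h ▸ (C.adj_snd hC.not_nil).ne.symm⟩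
    · exact ⟨v₀, C.start_mem_support, h⟩
  obtain ⟨W⟩ := (h2.2 x).preconnected ⟨c, hcx⟩ ⟨y, hyx⟩
  set W' := W.map (Embedding.induce {w : V | w ≠ x}).toHom with hW'
  have hxW' : x ∉ W'.support := by
    rw [hW', Walk.support_map, List.mem_map]
    rintro ⟨a, -, ha⟩
    exact a.2 ha
  obtain ⟨u, z, P, hP, huC, hzH, hPW, hPC, hPH⟩ :=
    W'.exists_isPath_from_to_sets (S := {w | w ∈ C.support}) hcC hyH
  have hxu : x ≠ u := fun h => hxW' (hPW (h ▸ P.start_mem_support))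
  have hxz : x ≠ z := fun h => hxW' (hPW (h ▸ P.end_mem_support))
  obtain ⟨A, hA, hAC, hodd⟩ := hC.exists_isPath_odd_length_add hCodd hxC huC hxu P.length
  refine ⟨x, z, A.append P, ?_, by rwa [Walk.length_append]⟩
  exact isHPathWalk_append hA hP (fun w hw => hCH w (hAC hw)) hPH
    (fun w hw hwP => hPC w hwP (hAC hw)) hxH hzH hxz

/-- If a 2-connected graph `G` contains an odd cycle meeting a connected subgraph `H`
(with at least 2 vertices) in exactly one vertex, then `G` contains an odd `H`-path. -/
theorem odd_hpath_of_odd_cycle {V : Type*} [Fintype V] (G : SimpleGraph V)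
    (h2 : TwoConnected G) (H : G.Subgraph) (hH : H.Connected)
    (hcard : 2 ≤ H.verts.ncard)
    (v₀ : V) (C : G.Walk v₀ v₀) (hC : C.IsCycle) (hCodd : Odd C.length)
    (hmeet : ∃ x : V, {w : V | w ∈ C.support ∧ w ∈ H.verts} = {x}) :
    ∃ (u v : V) (q : G.Walk u v), IsHPathWalk G H q ∧ Odd q.length :=
  odd_hpath_of_odd_cycle_general G h2 H hcard v₀ C hC hCodd hmeet
end

section
/- The colouring of the even cycle C_{2k} (k ≥ 2) assigning the colours 1, 2, …, k, 1, 2, …, k to its edges in cyclic order is safely rainbow-connecting. -/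
/-!
Walking forward around the cycle from `x`, the edges met carry consecutive colours modulo `k`,
so an arc of at most `k` edges is a rainbow path, and an arc of fewer than `k` edges misses the
colour of the edge following it. Any two vertices are joined by an arc of at most `k` edges in one
of the two directions, and unless `y` is the antipode `x + k` of `x`, one of these arcs has fewer
than `k` edges. So the antipode is the only vertex that can be blocked for `x`.
-/

open SimpleGraph

/-- A colouring is rainbow-connecting on a subgraph `K` of `G`. -/
def RainbowConnectingOn {V : Type*} (G : SimpleGraph V) (K : G.Subgraph)
    (c : Sym2 V → ℕ) : Prop :=
  ∀ u ∈ K.verts, ∀ v ∈ K.verts,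
    ∃ p : G.Walk u v, p.IsPath ∧ (∀ e ∈ p.edges, e ∈ K.edgeSet) ∧ (p.edges.map c).Nodup

/-- `y` is blocked for `x`: every rainbow `xy`-path in `K` is blocking, i.e.
uses every colour in the image of `c`. -/
def BlockedFor {V : Type*} (G : SimpleGraph V) (K : G.Subgraph) (c : Sym2 V → ℕ)
    (x y : V) : Prop :=
  ∀ p : G.Walk x y, p.IsPath → (∀ e ∈ p.edges, e ∈ K.edgeSet) → (p.edges.map c).Nodup →
    ∀ col ∈ c '' K.edgeSet, col ∈ p.edges.map c

/-- A colouring is safe: every vertex has at most one blocked vertex. -/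
def SafeColouring {V : Type*} (G : SimpleGraph V) (K : G.Subgraph) (c : Sym2 V → ℕ) : Prop :=
  ∀ x ∈ K.verts, Set.Subsingleton {y | y ∈ K.verts ∧ BlockedFor G K c x y}

/-- Safely rainbow-connecting colouring of the subgraph `K`. -/
def SafelyRainbowConnecting {V : Type*} (G : SimpleGraph V) (K : G.Subgraph)
    (c : Sym2 V → ℕ) : Prop :=
  RainbowConnectingOn G K c ∧ SafeColouring G K c

theorem BlockedFor.symm {V : Type*} {G : SimpleGraph V} {K : G.Subgraph} {c : Sym2 V → ℕ}
    {x y : V} (h : BlockedFor G K c x y) : BlockedFor G K c y x := by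
  intro p hp hK hrainbow col hcol
  simpa using h p.reverse hp.reverse (by simpa using hK) (by simpa using hrainbow) col hcol

theorem Fin.val_sub_add_val_sub {n : ℕ} {x y : Fin n} (h : x ≠ y) :
    (y - x).val + (x - y).val = n := by
  rcases lt_or_gt_of_ne h with h | h
  · rw [Fin.coe_sub_iff_le.mpr h.le, Fin.coe_sub_iff_lt.mpr h]; omega
  · rw [Fin.coe_sub_iff_le.mpr h.le, Fin.coe_sub_iff_lt.mpr h]; omega

open Fin.NatCast in
theorem Fin.val_add_natCast_mod {n k : ℕ} [NeZero n] (hk : k ∣ n) (x : Fin n) (i : ℕ) :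
    (x + (i : Fin n)).val % k = (x.val + i) % k := by
  rw [Fin.val_add, Fin.val_natCast, Nat.mod_mod_of_dvd _ hk, Nat.add_mod,
    Nat.mod_mod_of_dvd _ hk, ← Nat.add_mod]

theorem nodup_map_range_add_mod {k : ℕ} (a : ℕ) {d : ℕ} (hd : d ≤ k) :
    ((List.range d).map fun i => (a + i) % k).Nodup := by
  refine List.Nodup.map_on (fun i hi j hj hij => ?_) List.nodup_range
  rw [List.mem_range] at hi hj
  have := Nat.ModEq.add_left_cancel' a hij
  rwa [Nat.ModEq, Nat.mod_eq_of_lt (by omega), Nat.mod_eq_of_lt (by omega)] at this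

theorem add_mod_notMem_map_range_add_mod {k : ℕ} (a : ℕ) {d : ℕ} (hd : d < k) :
    (a + d) % k ∉ (List.range d).map fun i => (a + i) % k := by
  simp only [List.mem_map, List.mem_range, not_exists, not_and]
  intro i hi hid
  have := Nat.ModEq.add_left_cancel' a hid
  rw [Nat.ModEq, Nat.mod_eq_of_lt (by omega), Nat.mod_eq_of_lt (by omega)] at this
  omega

namespace SimpleGraph.cycleGraph

open Fin.NatCast Fin.CommRing

variable {n : ℕ} [NeZero n]

theorem adj_add_one (hn : 1 < n) (j : Fin n) : (cycleGraph n).Adj j (j + 1) := by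
  rw [cycleGraph_adj', add_sub_cancel_left, Fin.val_one', Nat.mod_eq_of_lt hn]
  exact Or.inr rfl

def forwardWalk (hn : 1 < n) : (x : Fin n) → (d : ℕ) → (cycleGraph n).Walk x (x + d)
  | x, 0 => Walk.nil.copy rfl (by simp)
  | x, d + 1 => (Walk.cons (adj_add_one hn x) (forwardWalk hn (x + 1) d)).copy rfl
      (by rw [Nat.cast_succ, add_comm (d : Fin n), add_assoc])

variable (hn : 1 < n)

theorem support_forwardWalk (x : Fin n) (d : ℕ) :
    (forwardWalk hn x d).support = (List.range (d + 1)).map fun i : ℕ => x + i := by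
  induction d generalizing x with
  | zero => simp [forwardWalk]
  | succ d ih =>
    rw [forwardWalk, Walk.support_copy, Walk.support_cons, ih, List.range_succ_eq_map (n := d + 1)]
    simp only [List.map_cons, List.map_map, Function.comp_def, Nat.cast_zero, add_zero,
      Nat.cast_succ, add_assoc, add_comm (1 : Fin n)]

theorem edges_forwardWalk (x : Fin n) (d : ℕ) :
    (forwardWalk hn x d).edges = (List.range d).map fun i : ℕ => s(x + i, x + i + 1) := by
  induction d generalizing x with
  | zero => simp [forwardWalk]
  | succ d ih =>
    rw [forwardWalk, Walk.edges_copy, Walk.edges_cons, ih, List.range_succ_eq_map]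
    simp only [List.map_cons, List.map_map, Function.comp_def, Nat.cast_zero, add_zero,
      Nat.cast_succ, add_assoc, add_comm (1 : Fin n), zero_add]

theorem isPath_forwardWalk (x : Fin n) {d : ℕ} (hd : d < n) : (forwardWalk hn x d).IsPath := by
  rw [Walk.isPath_def, support_forwardWalk]
  refine List.Nodup.map_on (fun i hi j hj hij => ?_) List.nodup_range
  rw [List.mem_range] at hi hj
  simpa [Fin.ext_iff, Fin.val_natCast, Nat.mod_eq_of_lt, hi.trans_le hd, hj.trans_le hd]
    using add_left_cancel hij

def arc (x y : Fin n) : (cycleGraph n).Walk x y :=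
  (forwardWalk hn x (y - x).val).copy rfl (by simp)

theorem isPath_arc (x y : Fin n) : (arc hn x y).IsPath := by
  rw [arc, Walk.isPath_copy]
  exact isPath_forwardWalk hn x (y - x).isLt

theorem edges_arc_map_colouring {k : ℕ} (hk : k ∣ n) {c : Sym2 (Fin n) → ℕ}
    (hc : ∀ i : Fin n, c s(i, i + 1) = i.val % k + 1) (x y : Fin n) :
    (arc hn x y).edges.map c
      = ((List.range (y - x).val).map fun i => (x.val + i) % k).map (· + 1) := by
  simp only [arc, Walk.edges_copy, edges_forwardWalk, List.map_map]
  refine List.map_congr_left fun i _ => ?_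
  simp [hc, Fin.val_add_natCast_mod hk]

theorem nodup_map_arc_of_val_sub_le {k : ℕ} (hk : k ∣ n) {c : Sym2 (Fin n) → ℕ}
    (hc : ∀ i : Fin n, c s(i, i + 1) = i.val % k + 1) {x y : Fin n} (h : (y - x).val ≤ k) :
    ((arc hn x y).edges.map c).Nodup := by
  rw [edges_arc_map_colouring hn hk hc]
  exact (nodup_map_range_add_mod x.val h).map (add_left_injective 1)

/-- An arc of fewer than `k` edges is a rainbow path missing the colour of the edge after it. -/
theorem not_blockedFor_of_val_sub_lt (hn : 1 < n) {k : ℕ} (hk : k ∣ n) {c : Sym2 (Fin n) → ℕ}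
    (hc : ∀ i : Fin n, c s(i, i + 1) = i.val % k + 1) {x y : Fin n} (h : (y - x).val < k) :
    ¬ BlockedFor (cycleGraph n) ⊤ c x y := by
  intro hb
  have hy : y.val % k = (x.val + (y - x).val) % k := by
    rw [← Fin.val_add_natCast_mod hk, Fin.cast_val_eq_self, add_sub_cancel]
  have hmissing : c s(y, y + 1) ∉ (arc hn x y).edges.map c := by
    rw [hc, edges_arc_map_colouring hn hk hc, List.mem_map_of_injective (add_left_injective 1), hy]
    exact add_mod_notMem_map_range_add_mod _ h
  exact hmissing <| hb (arc hn x y) (isPath_arc hn x y)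
    (fun _ he => Walk.edges_subset_edgeSet _ he) (nodup_map_arc_of_val_sub_le hn hk hc h.le)
    _ ⟨s(y, y + 1), adj_add_one hn y, rfl⟩

variable {k : ℕ} [NeZero (2 * k)] {c : Sym2 (Fin (2 * k)) → ℕ}

theorem exists_rainbow_path (hc : ∀ i : Fin (2 * k), c s(i, i + 1) = i.val % k + 1)
    (u v : Fin (2 * k)) :
    ∃ p : (cycleGraph (2 * k)).Walk u v, p.IsPath ∧ (p.edges.map c).Nodup := by
  have hn : 1 < 2 * k := by have := NeZero.ne (2 * k); omega
  rcases le_or_gt (v - u).val k with h | h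
  · exact ⟨arc hn u v, isPath_arc hn u v, nodup_map_arc_of_val_sub_le hn (dvd_mul_left k 2) hc h⟩
  · have huv : u ≠ v := by rintro rfl; simp at h
    have h' : (u - v).val ≤ k := by have := Fin.val_sub_add_val_sub huv; omega
    refine ⟨(arc hn v u).reverse, (isPath_arc hn v u).reverse, ?_⟩
    simpa using nodup_map_arc_of_val_sub_le hn (dvd_mul_left k 2) hc h'

theorem eq_add_of_blockedFor (hc : ∀ i : Fin (2 * k), c s(i, i + 1) = i.val % k + 1)
    {x y : Fin (2 * k)} (hb : BlockedFor (cycleGraph (2 * k)) ⊤ c x y) : y = x + k := by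
  have hn : 1 < 2 * k := by have := NeZero.ne (2 * k); omega
  rcases lt_trichotomy (y - x).val k with h | h | h
  · exact absurd hb (not_blockedFor_of_val_sub_lt hn (dvd_mul_left k 2) hc h)
  · calc y = x + ((y - x).val : Fin (2 * k)) := by rw [Fin.cast_val_eq_self, add_sub_cancel]
      _ = x + k := by rw [h]
  · have hxy : x ≠ y := by rintro rfl; simp at h
    have h' : (x - y).val < k := by have := Fin.val_sub_add_val_sub hxy; omega
    exact absurd hb.symm (not_blockedFor_of_val_sub_lt hn (dvd_mul_left k 2) hc h')

end SimpleGraph.cycleGraph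

/-- The colouring of the even cycle `C_{2k}` (`k ≥ 2`) assigning colours
`1, 2, …, k, 1, 2, …, k` to its edges in cyclic order is safely rainbow-connecting. -/
theorem even_cycle_colouring_safe (k : ℕ) (hk : 2 ≤ k)
    (c : Sym2 (Fin (2 * k)) → ℕ)
    (hc : ∀ i : Fin (2 * k), c s(i, i + ⟨1, by omega⟩) = (i : ℕ) % k + 1) :
    SafelyRainbowConnecting (SimpleGraph.cycleGraph (2 * k))
      (⊤ : (SimpleGraph.cycleGraph (2 * k)).Subgraph) c := by
  have : NeZero (2 * k) := ⟨by omega⟩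
  have hone : (⟨1, by omega⟩ : Fin (2 * k)) = 1 :=
    Fin.ext (by rw [Fin.val_one', Nat.mod_eq_of_lt (by omega)])
  rw [hone] at hc
  refine ⟨fun u _ v _ => ?_, fun x _ y₁ hy₁ y₂ hy₂ => ?_⟩
  · obtain ⟨p, hp, hrainbow⟩ := cycleGraph.exists_rainbow_path hc u v
    exact ⟨p, hp, fun _ he => p.edges_subset_edgeSet he, hrainbow⟩
  · rw [cycleGraph.eq_add_of_blockedFor hc hy₁.2, cycleGraph.eq_add_of_blockedFor hc hy₂.2]
end
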